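/- Let E be a directed graph and K a field. Let D be a set containing exactly one irrational infinite path from each tail-equivalence class of irrational paths, together with all singular vertices of E. Then the ℤ-graded L_K(E)-modules V_{[x]}(n), for x ∈ D and n ∈ ℤ, are graded simple and pairwise non-graded-isomorphic; moreover, for every y ∈ ∂E which is not rational and every m ∈ ℤ, there exist x ∈ D and k ∈ ℤ with y ∼_k x, and then V_{[y]}(m) is graded isomorphic to V_{[x]}(m + k). -/

import Mathlib

open scoped Classical

/-- A directed graph: vertices, edges, source and range maps. -/
structure DirGraph : Type 1 where
  V : Type
  E : Type
  s : E → V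
  r : E → V

namespace DirGraph

variable (G : DirGraph)

/-- A finite path: a source vertex together with a compatible list of edges
(the empty list gives the path of length 0 at `src`). -/
structure FinPath where
  src : G.V
  edges : List G.E
  src_eq : ∀ e ∈ edges.head?, G.s e = src
  chain : edges.Chain' (fun e f => G.r e = G.s f)

variable {G}

/-- The range of a finite path. -/
def FinPath.rng (μ : G.FinPath) : G.V :=
  ((μ.edges.getLast?).map G.r).getD μ.src

/-- The length of a finite path. -/
def FinPath.length (μ : G.FinPath) : ℕ := μ.edges.length

variable (G)

/-- An infinite path. -/
structure InfPath where
  edges : ℕ → G.E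
  chain : ∀ n, G.r (edges n) = G.s (edges (n + 1))

/-- The source of an infinite path. -/
def InfPath.src {G : DirGraph} (p : G.InfPath) : G.V := G.s (p.edges 0)

def IsSink (v : G.V) : Prop := ∀ e, G.s e ≠ v

def IsInfEmitter (v : G.V) : Prop := {e | G.s e = v}.Infinite

def IsSingular (v : G.V) : Prop := IsSink G v ∨ IsInfEmitter G v

/-- Boundary paths: infinite paths, together with finite paths ending in a singular vertex. -/
def BPath : Type := {x : G.FinPath ⊕ G.InfPath // ∀ μ, x = Sum.inl μ → IsSingular G μ.rng}

variable {G}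

/-- The source of a boundary path. -/
def BPath.src (x : G.BPath) : G.V :=
  match x.1 with
  | Sum.inl μ => μ.src
  | Sum.inr p => p.src

def BPath.IsInfinite (x : G.BPath) : Prop := ∃ p, x.1 = Sum.inr p

/-- `IsCat μ p x` means `x = μ p`, i.e. `x` is the concatenation of the finite path `μ`
with the boundary path `p` (in particular `r(μ) = s(p)`). -/
def IsCat (μ : G.FinPath) (p x : G.BPath) : Prop :=
  μ.rng = p.src ∧
  match p.1, x.1 with
  | Sum.inl q, Sum.inl ξ => ξ.src = μ.src ∧ ξ.edges = μ.edges ++ q.edges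
  | Sum.inr q, Sum.inr ξ =>
      (∀ (i : ℕ) (h : i < μ.edges.length), ξ.edges i = μ.edges.get ⟨i, h⟩) ∧
      (∀ i : ℕ, ξ.edges (μ.edges.length + i) = q.edges i)
  | _, _ => False

/-- `x ∼_k y` : tail equivalence with lag `k`. -/
def TailEqLag (x y : G.BPath) (k : ℤ) : Prop :=
  ∃ (μ ν : G.FinPath) (p : G.BPath),
    IsCat μ p x ∧ IsCat ν p y ∧ (μ.length : ℤ) - (ν.length : ℤ) = k

/-- Tail equivalence. -/
def TailEq (x y : G.BPath) : Prop := ∃ k, TailEqLag x y k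

/-- The tail-equivalence class (orbit) of a boundary path. -/
def orbit (x : G.BPath) : Set G.BPath := {y | TailEq y x}

/-- A closed path: positive length, same source and range. -/
def FinPath.IsClosed (c : G.FinPath) : Prop := 0 < c.length ∧ c.rng = c.src

/-- A boundary path is rational if it is tail equivalent to `c^∞` for some closed path `c`;
here `c^∞` is characterized as the unique boundary path `p` with `p = c p`. -/
def IsRational (x : G.BPath) : Prop :=
  ∃ (c : G.FinPath) (p : G.BPath), 0 < c.length ∧ IsCat c p p ∧ TailEq x p

/-- A simple closed path: a closed path which is not a proper power of a closed path. -/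
def FinPath.IsSimpleClosed (c : G.FinPath) : Prop :=
  c.IsClosed ∧
    ¬ ∃ (d : G.FinPath) (n : ℕ), 2 ≤ n ∧ d.IsClosed ∧ c.src = d.src ∧
        c.edges = (List.replicate n d.edges).flatten

/-- A cycle: a closed path passing through no vertex twice. -/
def FinPath.IsCycle (c : G.FinPath) : Prop := c.IsClosed ∧ (c.edges.map G.s).Nodup

/-- An exit for a finite path. -/
def FinPath.HasExit (c : G.FinPath) : Prop :=
  ∃ (i : ℕ) (h : i < c.edges.length) (e : G.E),
    G.s e = G.s (c.edges.get ⟨i, h⟩) ∧ e ≠ c.edges.get ⟨i, h⟩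

/-- `c` is a rotation of `d`. -/
def FinPath.IsRotationOf (c d : G.FinPath) : Prop := ∃ i, c.edges = d.edges.rotate i

/-- A maximal cycle: a cycle such that any cycle from which there is a finite path to its
source is a rotation of it. -/
def FinPath.IsMaxCycle (c : G.FinPath) : Prop :=
  c.IsCycle ∧ ∀ d : G.FinPath, d.IsCycle →
    (∃ μ : G.FinPath, μ.src = d.src ∧ μ.rng = c.src) → d.IsRotationOf c

/-- A maximal sink: a sink with no finite path from the source of any cycle to it. -/
def IsMaxSink (G : DirGraph) (v : G.V) : Prop :=
  IsSink G v ∧ ¬ ∃ (d μ : G.FinPath), d.IsCycle ∧ μ.src = d.src ∧ μ.rng = v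

/-- A graph is row-finite if every vertex emits finitely many edges. -/
def RowFinite (G : DirGraph) : Prop := ∀ v : G.V, {e | G.s e = v}.Finite

/-- The set of predecessors of a vertex. -/
def preds (G : DirGraph) (v : G.V) : Set G.V := {w | ∃ μ : G.FinPath, μ.src = w ∧ μ.rng = v}

/-- The finite path of length 0 at a vertex. -/
def vertexPath (G : DirGraph) (v : G.V) : G.FinPath :=
  ⟨v, [], by intro e he; simp at he, List.isChain_nil⟩

/-- A singular vertex, seen as a boundary path. -/
def vertexBPath (G : DirGraph) (v : G.V) (h : IsSingular G v) : G.BPath :=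
  ⟨Sum.inl (vertexPath G v), by
    intro μ hμ
    injection hμ with h2
    subst h2
    exact h⟩

/-- The finite path consisting of a single edge. -/
def singleE (G : DirGraph) (e : G.E) : G.FinPath :=
  ⟨G.s e, [e], by
    intro f hf
    simp only [List.head?_cons, Option.mem_def, Option.some.injEq] at hf
    subst hf
    rfl, List.isChain_singleton e⟩

/-- `a_μ`: the product of the values of `a` along a finite path. -/
def aval {G : DirGraph} {K : Type} [Field K] (a : G.E → K) (μ : G.FinPath) : K :=
  (μ.edges.map a).prod

/-! ## The Leavitt path algebra -/

/-- Generators of the Leavitt path algebra: vertices, edges and ghost edges. -/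
inductive Gen (G : DirGraph) : Type
  | vtx : G.V → Gen G
  | edg : G.E → Gen G
  | ghd : G.E → Gen G

/-- The defining relations of the Leavitt path algebra. -/
inductive LRel (G : DirGraph) (K : Type) [Field K] :
    FreeAlgebra K (Gen G) → FreeAlgebra K (Gen G) → Prop
  | vv_eq (v : G.V) :
      LRel G K (FreeAlgebra.ι K (Gen.vtx v) * FreeAlgebra.ι K (Gen.vtx v))
        (FreeAlgebra.ι K (Gen.vtx v))
  | vv_ne {v w : G.V} (h : v ≠ w) :
      LRel G K (FreeAlgebra.ι K (Gen.vtx v) * FreeAlgebra.ι K (Gen.vtx w)) 0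
  | e1l (e : G.E) :
      LRel G K (FreeAlgebra.ι K (Gen.vtx (G.s e)) * FreeAlgebra.ι K (Gen.edg e))
        (FreeAlgebra.ι K (Gen.edg e))
  | e1r (e : G.E) :
      LRel G K (FreeAlgebra.ι K (Gen.edg e) * FreeAlgebra.ι K (Gen.vtx (G.r e)))
        (FreeAlgebra.ι K (Gen.edg e))
  | e2l (e : G.E) :
      LRel G K (FreeAlgebra.ι K (Gen.vtx (G.r e)) * FreeAlgebra.ι K (Gen.ghd e))
        (FreeAlgebra.ι K (Gen.ghd e))
  | e2r (e : G.E) :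
      LRel G K (FreeAlgebra.ι K (Gen.ghd e) * FreeAlgebra.ι K (Gen.vtx (G.s e)))
        (FreeAlgebra.ι K (Gen.ghd e))
  | ck1_eq (e : G.E) :
      LRel G K (FreeAlgebra.ι K (Gen.ghd e) * FreeAlgebra.ι K (Gen.edg e))
        (FreeAlgebra.ι K (Gen.vtx (G.r e)))
  | ck1_ne {e f : G.E} (h : e ≠ f) :
      LRel G K (FreeAlgebra.ι K (Gen.ghd e) * FreeAlgebra.ι K (Gen.edg f)) 0
  | ck2 (v : G.V) (hfin : {e | G.s e = v}.Finite) (hne : ∃ e, G.s e = v) :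
      LRel G K (FreeAlgebra.ι K (Gen.vtx v))
        (∑ e ∈ hfin.toFinset, FreeAlgebra.ι K (Gen.edg e) * FreeAlgebra.ι K (Gen.ghd e))

/-- The Leavitt path algebra of `G` over `K`. -/
abbrev LPA (G : DirGraph) (K : Type) [Field K] : Type := RingQuot (LRel G K)

/-- The image of a vertex in the Leavitt path algebra. -/
def ofV (G : DirGraph) (K : Type) [Field K] (v : G.V) : LPA G K :=
  RingQuot.mkAlgHom K (LRel G K) (FreeAlgebra.ι K (Gen.vtx v))

/-- The image of an edge in the Leavitt path algebra. -/
def ofE (G : DirGraph) (K : Type) [Field K] (e : G.E) : LPA G K :=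
  RingQuot.mkAlgHom K (LRel G K) (FreeAlgebra.ι K (Gen.edg e))

/-- The image of a ghost edge in the Leavitt path algebra. -/
def ofG (G : DirGraph) (K : Type) [Field K] (e : G.E) : LPA G K :=
  RingQuot.mkAlgHom K (LRel G K) (FreeAlgebra.ι K (Gen.ghd e))

/-- The element `μ` of the Leavitt path algebra associated to a finite path `μ`. -/
def pathElem (G : DirGraph) (K : Type) [Field K] (μ : G.FinPath) : LPA G K :=
  ofV G K μ.src * (μ.edges.map (ofE G K)).prod

/-- The element `μ^*` of the Leavitt path algebra associated to a finite path `μ`. -/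
def pathStarElem (G : DirGraph) (K : Type) [Field K] (μ : G.FinPath) : LPA G K :=
  (μ.edges.reverse.map (ofG G K)).prod * ofV G K μ.src

/-- The degree-`n` homogeneous component of the canonical `ℤ`-grading of the Leavitt
path algebra: the span of the monomials `μ ν^*` with `|μ| - |ν| = n`. -/
def LPAdeg (G : DirGraph) (K : Type) [Field K] (n : ℤ) : Submodule K (LPA G K) :=
  Submodule.span K {x | ∃ μ ν : G.FinPath, μ.rng = ν.rng ∧
    (μ.length : ℤ) - (ν.length : ℤ) = n ∧ x = pathElem G K μ * pathStarElem G K ν}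

/-- `W` is a `ℤ`-grading making `M` a graded module over the canonically graded
Leavitt path algebra. -/
def IsModuleGrading (G : DirGraph) (K : Type) [Field K] (M : Type) [AddCommGroup M]
    [Module K M] [Module (LPA G K) M] (W : ℤ → Submodule K M) : Prop :=
  DirectSum.IsInternal W ∧
    ∀ (m k : ℤ) (a : LPA G K) (y : M), a ∈ LPAdeg G K m → y ∈ W k → a • y ∈ W (m + k)

/-- A set is graded (with respect to a grading `W`) if each of its elements is a finite sum
of homogeneous elements of the set. -/
def GradedCarrier {K M : Type} [Field K] [AddCommGroup M] [Module K M]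
    (W : ℤ → Submodule K M) (S : Set M) : Prop :=
  ∀ m ∈ S, ∃ l : List M, (∀ z ∈ l, z ∈ S ∧ ∃ k, z ∈ W k) ∧ l.sum = m

/-- A graded isomorphism between graded modules over the Leavitt path algebra. -/
def GradedIsoLPA (G : DirGraph) (K : Type) [Field K] (M N : Type)
    [AddCommGroup M] [AddCommGroup N] [Module K M] [Module K N]
    [Module (LPA G K) M] [Module (LPA G K) N]
    (W : ℤ → Submodule K M) (W' : ℤ → Submodule K N) : Prop :=
  ∃ f : M ≃ₗ[LPA G K] N, (∀ k, ∀ m ∈ W k, f m ∈ W' k) ∧ ∀ k, ∀ n ∈ W' k, f.symm n ∈ W k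

/-- A module over the Leavitt path algebra is unital if it is generated by the images of the
vertices. -/
def IsUnitalModule (G : DirGraph) (K : Type) [Field K] (M : Type) [AddCommGroup M]
    [Module (LPA G K) M] : Prop :=
  ∀ m : M, m ∈ Submodule.span (LPA G K) {y : M | ∃ (v : G.V) (m' : M), y = ofV G K v • m'}

/-! ## Chen modules, specified by a basis and the action of the generators -/

/-- A specification of the (twisted) Chen module attached to a boundary path `x`:
an `L_K(E)`-module `M` which is a `K'`-vector space with basis the tail-equivalence class
of `x`, the generators acting by the τ-twisted shift formulas. Here `K ⊆ K'` is a field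
extension and `τ : E¹ → K'` is a family of nonzero scalars. -/
structure ChenSpecT (G : DirGraph) (K K' : Type) [Field K] [Field K'] [Algebra K K']
    (τ : G.E → K') (x : G.BPath) (M : Type) [AddCommGroup M] [Module K' M]
    [Module (LPA G K) M] : Type where
  tau_ne : ∀ e, τ e ≠ 0
  basis : Module.Basis (orbit x) K' M
  act_v : ∀ (v : G.V) (p : orbit x),
    ofV G K v • basis p = if v = BPath.src (p : G.BPath) then basis p else 0
  act_e : ∀ (e : G.E) (p q : orbit x), IsCat (singleE G e) (p : G.BPath) (q : G.BPath) →
    ofE G K e • basis p = τ e • basis q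
  act_e_zero : ∀ (e : G.E) (p : orbit x),
    (¬ ∃ q : G.BPath, IsCat (singleE G e) (p : G.BPath) q) → ofE G K e • basis p = 0
  act_g : ∀ (e : G.E) (p q : orbit x), IsCat (singleE G e) (p : G.BPath) (q : G.BPath) →
    ofG G K e • basis q = (τ e)⁻¹ • basis p
  act_g_zero : ∀ (e : G.E) (q : orbit x),
    (¬ ∃ p : G.BPath, IsCat (singleE G e) p (q : G.BPath)) → ofG G K e • basis q = 0

/-- Specification of the Chen module `V_{[x]}^a` twisted by `a : E¹ → K^*`
(`a = 1` gives `V_{[x]}`). -/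
abbrev ChenSpec (G : DirGraph) (K : Type) [Field K] (a : G.E → K) (x : G.BPath) (M : Type)
    [AddCommGroup M] [Module K M] [Module (LPA G K) M] : Type :=
  ChenSpecT G K K a x M

/-- The canonical grading on a Chen module: the degree-`k` component is spanned by the basis
elements tail-equivalent to `x` with lag `k`. -/
def chenW {G : DirGraph} {K' : Type} [Field K'] {x : G.BPath} {M : Type}
    [AddCommGroup M] [Module K' M] (b : Module.Basis (orbit x) K' M) (k : ℤ) : Submodule K' M :=
  Submodule.span K' (⇑b '' {p : orbit x | TailEqLag (p : G.BPath) x k})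

/-! ## The module `K L_x` -/

/-- The set `L_x` of pairs `(y, k)` with `y ∼_k x`. -/
def Lset (G : DirGraph) (x : G.BPath) : Set (G.BPath × ℤ) := {yk | TailEqLag yk.1 x yk.2}

/-- The underlying `K`-vector space of the module `K L_x`, with basis `L_x`. -/
abbrev KLCarrier (G : DirGraph) (K : Type) [Field K] (x : G.BPath) : Type := (Lset G x) →₀ K

/-- Specification of the `L_K(E)`-module structure on `K L_x`, given by
`(μ ν^*) ⬝ (y, k) = (μ p, |μ| - |ν| + k)` when `y = ν p`, and `0` otherwise. The module
structure is encoded as a `K`-algebra homomorphism `ρ` to the endomorphism algebra. -/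
def KLSpec (G : DirGraph) (K : Type) [Field K] (x : G.BPath)
    (ρ : LPA G K →ₐ[K] Module.End K (KLCarrier G K x)) : Prop :=
  (∀ (μ ν : G.FinPath), μ.rng = ν.rng → ∀ (yk zk : Lset G x) (p : G.BPath),
      IsCat ν p (yk : G.BPath × ℤ).1 → IsCat μ p (zk : G.BPath × ℤ).1 →
      (zk : G.BPath × ℤ).2 = (yk : G.BPath × ℤ).2 + (μ.length : ℤ) - (ν.length : ℤ) →
      ρ (pathElem G K μ * pathStarElem G K ν) (Finsupp.single yk 1) = Finsupp.single zk 1) ∧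
  (∀ (μ ν : G.FinPath), μ.rng = ν.rng → ∀ yk : Lset G x,
      (¬ ∃ p : G.BPath, IsCat ν p (yk : G.BPath × ℤ).1) →
      ρ (pathElem G K μ * pathStarElem G K ν) (Finsupp.single yk 1) = 0)

/-- The canonical grading of `K L_x`: `(y, k)` is homogeneous of degree `k`. -/
noncomputable def KLgr (G : DirGraph) (K : Type) [Field K] (x : G.BPath) (k : ℤ) :
    Submodule K (KLCarrier G K x) :=
  Submodule.span K {m | ∃ yk : Lset G x, (yk : G.BPath × ℤ).2 = k ∧ m = Finsupp.single yk 1}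

end DirGraph

/-!
Elements of `L_K(E)` act on the basis `[x]` of a Chen module by partial shifts: `μ` prepends `μ`
and `ν^*` strips a prefix `ν` (killing the vectors without one). Products of vertices, of the
projections `μ μ^*` and of their complements `1 - μ μ^*` therefore act on every Chen module as
indicators of sets of boundary paths, and any two boundary paths `p ≠ q` are separated by one of
them: a prefix of `p` that is not a prefix of `q` if `p` is infinite, and if `p = ξ w` ends at
the singular vertex `w`, the element `ξ a ξ^*` with `a` equal to `1`, `w` or `w (1 - e e^*)`
according as `q` does not start with `ξ`, or `q = ξ q'` with `q'` not starting at `w`, or with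
`q'` starting with the edge `e`.

A separating indicator isolates one basis vector in the finite support of a nonzero vector, and
the elements `μ ν^*` move it to any other point of the single orbit `[x]`: `V_{[x]}` is simple,
not only graded simple. A graded isomorphism `V_{[x]}(n) ≅ V_{[y]}(m)` commutes with every
indicator fixing `x`, so the image of `x` is supported on `{x}`; hence `x ∈ [y]` in degree
`m - n`, which for `x, y ∈ D` forces `x = y` and, `x` being irrational, `n = m`. Conversely, if
`y ∼_k x` then `[y] = [x]`, and the identity on this common basis is `L_K(E)`-linear, since the
generators act by the same formulas on both modules; it shifts degrees by `k`.
-/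

theorem LinearMap.map_smul_of_basis {K A ι M N : Type*} [CommSemiring K] [Semiring A]
    [Algebra K A] [AddCommMonoid M] [Module K M] [Module A M] [IsScalarTower K A M]
    [AddCommMonoid N] [Module K N] [Module A N] [IsScalarTower K A N]
    (b : Module.Basis ι K M) (f : M →ₗ[K] N) (a : A) (h : ∀ i, f (a • b i) = a • f (b i))
    (m : M) : f (a • m) = a • f m :=
  LinearMap.congr_fun (b.ext (f₁ := f ∘ₗ DistribSMul.toLinearMap K M a)
    (f₂ := DistribSMul.toLinearMap K N a ∘ₗ f) h) m

theorem LinearMap.map_smul_of_map_smul_generators {K X M N : Type*} [CommSemiring K]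
    {s : FreeAlgebra K X → FreeAlgebra K X → Prop}
    [AddCommMonoid M] [Module K M] [Module (RingQuot s) M] [IsScalarTower K (RingQuot s) M]
    [AddCommMonoid N] [Module K N] [Module (RingQuot s) N] [IsScalarTower K (RingQuot s) N]
    (f : M →ₗ[K] N)
    (h : ∀ (g : X) (m : M), f (RingQuot.mkAlgHom K s (FreeAlgebra.ι K g) • m) =
      RingQuot.mkAlgHom K s (FreeAlgebra.ι K g) • f m)
    (a : RingQuot s) (m : M) : f (a • m) = a • f m := by
  obtain ⟨u, rfl⟩ := RingQuot.mkAlgHom_surjective K s a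
  induction u using FreeAlgebra.induction generalizing m with
  | grade0 r => rw [AlgHom.commutes, algebraMap_smul, algebraMap_smul, map_smul]
  | grade1 g => exact h g m
  | mul u v ihu ihv => rw [map_mul, mul_smul, mul_smul, ihu, ihv]
  | add u v ihu ihv => rw [map_add, add_smul, add_smul, map_add, ihu, ihv]

namespace DirGraph

variable {G : DirGraph}

section Paths

theorem FinPath.ext {μ ν : G.FinPath} (hsrc : μ.src = ν.src) (hedges : μ.edges = ν.edges) :
    μ = ν := by
  cases μ; cases ν; simp_all

theorem InfPath.ext {p q : G.InfPath} (h : p.edges = q.edges) : p = q := by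
  cases p; cases q; simp_all

theorem FinPath.rng_of_getLast? {μ : G.FinPath} {e : G.E} (h : μ.edges.getLast? = some e) :
    μ.rng = G.r e := by
  simp [FinPath.rng, h]

theorem FinPath.rng_of_edges_eq_nil {μ : G.FinPath} (h : μ.edges = []) : μ.rng = μ.src := by
  simp [FinPath.rng, h]

@[simp] theorem vertexPath_edges (v : G.V) : (vertexPath G v).edges = [] := rfl
@[simp] theorem singleE_edges (e : G.E) : (singleE G e).edges = [e] := rfl

def FinPath.comp (μ ν : G.FinPath) (h : μ.rng = ν.src) : G.FinPath where
  src := μ.src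
  edges := μ.edges ++ ν.edges
  src_eq e he := by
    cases hμ : μ.edges with
    | nil =>
      rw [hμ, List.nil_append] at he
      rw [ν.src_eq e he, ← h, FinPath.rng_of_edges_eq_nil hμ]
    | cons f t =>
      rw [hμ, List.cons_append, List.head?_cons, Option.mem_some_iff] at he
      exact he ▸ μ.src_eq f (by simp [hμ])
  chain := List.isChain_append.mpr ⟨μ.chain, ν.chain, fun a ha b hb => by
    rw [← FinPath.rng_of_getLast? ha, h, ν.src_eq b hb]⟩

@[simp] theorem FinPath.comp_src (μ ν : G.FinPath) (h : μ.rng = ν.src) :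
    (μ.comp ν h).src = μ.src := rfl

@[simp] theorem FinPath.comp_edges (μ ν : G.FinPath) (h : μ.rng = ν.src) :
    (μ.comp ν h).edges = μ.edges ++ ν.edges := rfl

theorem FinPath.comp_rng (μ ν : G.FinPath) (h : μ.rng = ν.src) : (μ.comp ν h).rng = ν.rng := by
  cases hl : ν.edges.getLast? with
  | none =>
    have hν : ν.edges = [] := List.getLast?_eq_none_iff.mp hl
    rw [FinPath.rng_of_edges_eq_nil hν, ← h]
    simp [FinPath.rng, hν]
  | some a =>
    rw [FinPath.rng_of_getLast? hl,
      FinPath.rng_of_getLast? (List.mem_getLast?_append_of_mem_getLast? hl)]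

end Paths

section Concatenation

theorem FinPath.rng_eq_of_edges_eq_append {ν κ τ : G.FinPath} (hsrc : κ.src = ν.src)
    (h : ν.rng = τ.src) (hedges : κ.edges = ν.edges ++ τ.edges) : κ.rng = τ.rng := by
  rw [show κ = ν.comp τ h from FinPath.ext hsrc hedges, FinPath.comp_rng]

theorem isCat_vertexPath (x : G.BPath) : IsCat (vertexPath G x.src) x x := by
  refine ⟨rfl, ?_⟩
  obtain ⟨ξ | ρ, hx⟩ := x
  · exact ⟨rfl, rfl⟩
  · exact ⟨fun i hi => by simp at hi, fun i => by simp⟩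

theorem IsCat.src_eq {μ : G.FinPath} {p x : G.BPath} (h : IsCat μ p x) : μ.src = x.src := by
  obtain ⟨ξp | ρp, hp⟩ := p <;> obtain ⟨ξ | ρ, hx⟩ := x
  · exact h.2.1.symm
  · exact h.2.elim
  · exact h.2.elim
  · obtain ⟨hrng, hpre, hsuf⟩ := h
    change μ.src = G.s (ρ.edges 0)
    cases hμ : μ.edges with
    | nil =>
      have h0 := hsuf 0
      simp only [hμ, List.length_nil, Nat.zero_add] at h0
      rw [← FinPath.rng_of_edges_eq_nil hμ, hrng, h0]
      rfl
    | cons e t =>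
      have h0 := hpre 0 (by simp [hμ])
      simp only [hμ, List.get_eq_getElem, List.getElem_cons_zero] at h0
      rw [h0, μ.src_eq e (by simp [hμ])]

theorem IsCat.eq_of_edges_eq_nil {μ : G.FinPath} {p x : G.BPath} (h : IsCat μ p x)
    (hμ : μ.edges = []) : p = x := by
  obtain ⟨ξp | ρp, hp⟩ := p <;> obtain ⟨ξ | ρ, hx⟩ := x
  · refine Subtype.ext (congrArg Sum.inl (FinPath.ext ?_ ?_))
    · rw [h.2.1, ← FinPath.rng_of_edges_eq_nil hμ, h.1]
      rfl
    · rw [h.2.2, hμ, List.nil_append]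
  · exact h.2.elim
  · exact h.2.elim
  · refine Subtype.ext (congrArg Sum.inr (InfPath.ext (funext fun i => ?_)))
    simpa [hμ] using (h.2.2 i).symm

theorem IsCat.right_unique {μ : G.FinPath} {p x y : G.BPath} (hx : IsCat μ p x)
    (hy : IsCat μ p y) : x = y := by
  obtain ⟨ξp | ρp, hp⟩ := p <;> obtain ⟨ξ | ρ, hx'⟩ := x <;> obtain ⟨ξ' | ρ', hy'⟩ := y
  all_goals first | exact hx.2.elim | exact hy.2.elim | skip
  · exact Subtype.ext (congrArg Sum.inl
      (FinPath.ext (hx.2.1.trans hy.2.1.symm) (hx.2.2.trans hy.2.2.symm)))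
  · refine Subtype.ext (congrArg Sum.inr (InfPath.ext (funext fun i => ?_)))
    rcases Nat.lt_or_ge i μ.edges.length with hi | hi
    · rw [hx.2.1 i hi, hy.2.1 i hi]
    · obtain ⟨j, rfl⟩ := Nat.exists_eq_add_of_le hi
      rw [hx.2.2 j, hy.2.2 j]

theorem IsCat.comp {μ ν : G.FinPath} {p q x : G.BPath} (hμ : IsCat μ p x) (hν : IsCat ν q p)
    (h : μ.rng = ν.src) : IsCat (μ.comp ν h) q x := by
  refine ⟨(FinPath.comp_rng μ ν h).trans hν.1, ?_⟩
  obtain ⟨ξq | ρq, hq⟩ := q <;> obtain ⟨ξp | ρp, hp⟩ := p <;> obtain ⟨ξ | ρ, hx⟩ := x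
  all_goals first | exact hμ.2.elim | exact hν.2.elim | skip
  · exact ⟨hμ.2.1, by rw [hμ.2.2, hν.2.2, FinPath.comp_edges, List.append_assoc]⟩
  · obtain ⟨-, hμpre, hμsuf⟩ := hμ
    obtain ⟨-, hνpre, hνsuf⟩ := hν
    refine ⟨fun i hi => ?_, fun i => ?_⟩
    · simp only [FinPath.comp_edges, List.get_eq_getElem] at hi ⊢
      rcases Nat.lt_or_ge i μ.edges.length with hlt | hge
      · rw [List.getElem_append_left hlt, hμpre i hlt, List.get_eq_getElem]
      · obtain ⟨j, rfl⟩ := Nat.exists_eq_add_of_le hge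
        have hj : j < ν.edges.length := by simp at hi; omega
        rw [List.getElem_append_right hge, hμsuf, hνpre j hj, List.get_eq_getElem]
        simp
    · change ρ.edges ((μ.edges ++ ν.edges).length + i) = ρq.edges i
      rw [List.length_append, Nat.add_assoc, hμsuf, hνsuf]

def firstEdge (p : G.BPath) : Option G.E :=
  match p.1 with
  | Sum.inl μ => μ.edges.head?
  | Sum.inr ρ => some (ρ.edges 0)

theorem firstEdge_src {p : G.BPath} {e : G.E} (h : firstEdge p = some e) : G.s e = p.src := by
  obtain ⟨ξ | ρ, hp⟩ := p
  · exact ξ.src_eq e h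
  · exact congrArg G.s (Option.some.inj h).symm

theorem IsCat.firstEdge_eq_of_edges_eq_cons {μ : G.FinPath} {p x : G.BPath} (h : IsCat μ p x) {e : G.E}
    {t : List G.E} (hμ : μ.edges = e :: t) : firstEdge x = some e := by
  obtain ⟨ξp | ρp, hp⟩ := p <;> obtain ⟨ξ | ρ, hx⟩ := x
  · change ξ.edges.head? = some e
    rw [h.2.2, hμ]
    rfl
  · exact h.2.elim
  · exact h.2.elim
  · change some (ρ.edges 0) = some e
    rw [h.2.1 0 (by simp [hμ])]
    simp [hμ]

theorem exists_isCat_singleE {p : G.BPath} {e : G.E} (h : firstEdge p = some e) :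
    ∃ d, IsCat (singleE G e) d p := by
  obtain ⟨ξ | ρ, hp⟩ := p
  · obtain ⟨t, hξ⟩ : ∃ t, ξ.edges = e :: t := by
      change ξ.edges.head? = some e at h
      cases hl : ξ.edges with
      | nil => simp [hl] at h
      | cons f t => exact ⟨t, by simp_all⟩
    have hchain : (e :: t).IsChain (fun e f => G.r e = G.s f) := hξ ▸ ξ.chain
    rw [List.isChain_cons] at hchain
    let τ : G.FinPath := ⟨G.r e, t, fun f hf => (hchain.1 f hf).symm, hchain.2⟩
    have hrng : τ.rng = ξ.rng :=
      (FinPath.rng_eq_of_edges_eq_append (ν := singleE G e) (τ := τ)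
        (ξ.src_eq e (by simp [hξ])).symm rfl hξ).symm
    exact ⟨⟨Sum.inl τ, fun μ hμ => Sum.inl.inj hμ ▸ hrng ▸ hp ξ rfl⟩, rfl,
      (ξ.src_eq e (by simp [hξ])).symm, hξ⟩
  · have he : ρ.edges 0 = e := Option.some.inj h
    refine ⟨⟨Sum.inr ⟨fun i => ρ.edges (i + 1), fun i => ρ.chain (i + 1)⟩,
      fun μ hμ => nomatch hμ⟩, ?_, fun i hi => ?_, fun i => ?_⟩
    · exact he ▸ ρ.chain 0
    · obtain rfl : i = 0 := by simpa using hi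
      exact he
    · exact congrArg ρ.edges (Nat.add_comm 1 i)

theorem IsCat.firstEdge_eq {p d : G.BPath} {e : G.E} (h : IsCat (singleE G e) d p) :
    firstEdge p = some e :=
  h.firstEdge_eq_of_edges_eq_cons rfl

theorem IsCat.rng_eq_of_edges_eq_append {ν κ τ : G.FinPath} {p q x : G.BPath}
    (hν : IsCat ν p x) (hκ : IsCat κ q x) (hτ : τ.src = p.src)
    (hsplit : κ.edges = ν.edges ++ τ.edges) : τ.rng = q.src :=
  (FinPath.rng_eq_of_edges_eq_append (hκ.src_eq.trans hν.src_eq.symm) (hν.1.trans hτ.symm)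
    hsplit).symm.trans hκ.1

theorem IsCat.exists_isCat_of_length_le {ν κ : G.FinPath} {p q x : G.BPath}
    (hν : IsCat ν p x) (hκ : IsCat κ q x) (hle : ν.edges.length ≤ κ.edges.length) :
    ∃ τ : G.FinPath, IsCat τ q p ∧ κ.edges = ν.edges ++ τ.edges := by
  obtain ⟨ξ | ρ, hx⟩ := x
  · obtain ⟨ξp | ρp, hp⟩ := p
    swap; · exact hν.2.elim
    obtain ⟨ξq | ρq, hq⟩ := q
    swap; · exact hκ.2.elim
    obtain ⟨l, hsplit, hξp⟩ : ∃ l, κ.edges = ν.edges ++ l ∧ ξp.edges = l ++ ξq.edges := by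
      rcases List.append_eq_append_iff.mp (hν.2.2.symm.trans hκ.2.2) with h | ⟨c, hc, hξq⟩
      · exact h
      · obtain rfl : c = [] := List.eq_nil_of_length_eq_zero
          (by have := congrArg List.length hc; simp at this; omega)
        exact ⟨[], by simp [hc], by simp [hξq]⟩
    have hchain : (l ++ ξq.edges).IsChain (fun e f => G.r e = G.s f) := hξp ▸ ξp.chain
    let τ : G.FinPath := ⟨ξp.src, l, fun f hf => ξp.src_eq f
      (hξp ▸ List.mem_head?_append_of_mem_head? hf), (List.isChain_append.mp hchain).1⟩
    exact ⟨τ, ⟨hν.rng_eq_of_edges_eq_append hκ rfl hsplit, rfl, hξp⟩, hsplit⟩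
  · obtain ⟨ξp | ρp, hp⟩ := p
    · exact hν.2.elim
    obtain ⟨ξq | ρq, hq⟩ := q
    · exact hκ.2.elim
    obtain ⟨hνpre, hνsuf⟩ := hν.2
    obtain ⟨hκpre, hκsuf⟩ := hκ.2
    set l := κ.edges.drop ν.edges.length
    have hl : ∀ i (hi : i < l.length), l[i] = ρp.edges i := fun i hi => by
      have : ν.edges.length + i < κ.edges.length := by simp [l] at hi; omega
      rw [List.getElem_drop]
      exact (hκpre _ this).symm.trans (hνsuf i)
    have hsplit : κ.edges = ν.edges ++ l := by
      conv_lhs => rw [← List.take_append_drop ν.edges.length κ.edges]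
      congr 1
      refine List.ext_getElem (by simp; omega) fun i h₁ h₂ => ?_
      have hi : i < κ.edges.length := by simp at h₁; omega
      rw [List.getElem_take]
      exact (hκpre i hi).symm.trans (hνpre i h₂)
    let τ : G.FinPath := ⟨G.s (ρp.edges 0), l, fun f hf => by
      obtain ⟨h0, rfl⟩ : ∃ h0 : 0 < l.length, l[0] = f := by
        cases hl' : l with
        | nil => simp [hl'] at hf
        | cons a t => simp_all
      rw [hl 0 h0], (κ.chain.drop _)⟩
    refine ⟨τ, ⟨hν.rng_eq_of_edges_eq_append hκ rfl hsplit, fun i hi => (hl i hi).symm,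
      fun i => ?_⟩, hsplit⟩
    have hlen : κ.edges.length = ν.edges.length + l.length := by simp [hsplit]
    change ρp.edges (l.length + i) = ρq.edges i
    rw [← hνsuf, ← hκsuf, hlen, Nat.add_assoc]

theorem IsCat.left_unique {μ : G.FinPath} {p q x : G.BPath} (hp : IsCat μ p x)
    (hq : IsCat μ q x) : p = q := by
  obtain ⟨τ, hτ, hsplit⟩ := hp.exists_isCat_of_length_le hq le_rfl
  exact (hτ.eq_of_edges_eq_nil (by simpa using hsplit)).symm

theorem IsCat.exists_of_edges_eq_cons {μ : G.FinPath} {p x : G.BPath} {e : G.E} {t : List G.E}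
    (h : IsCat μ p x) (hμ : μ.edges = e :: t) :
    ∃ (d : G.BPath) (τ : G.FinPath), IsCat (singleE G e) d x ∧ IsCat τ p d ∧ τ.edges = t := by
  obtain ⟨d, hd⟩ := exists_isCat_singleE (h.firstEdge_eq_of_edges_eq_cons hμ)
  obtain ⟨τ, hτ, hsplit⟩ := hd.exists_isCat_of_length_le h (by simp [hμ])
  exact ⟨d, τ, hd, hτ, by simpa [hμ] using hsplit.symm⟩

end Concatenation

section TailEquivalence

theorem tailEqLag_refl (x : G.BPath) : TailEqLag x x 0 :=
  ⟨_, _, x, isCat_vertexPath x, isCat_vertexPath x, sub_self _⟩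

theorem TailEqLag.symm {x y : G.BPath} {k : ℤ} (h : TailEqLag x y k) : TailEqLag y x (-k) := by
  obtain ⟨μ, ν, p, hμ, hν, rfl⟩ := h
  exact ⟨ν, μ, p, hν, hμ, by ring⟩

theorem IsCat.tailEqLag {μ : G.FinPath} {p x : G.BPath} (h : IsCat μ p x) :
    TailEqLag x p μ.length :=
  ⟨μ, _, p, h, isCat_vertexPath p, by simp [FinPath.length]⟩

theorem TailEqLag.trans {x y z : G.BPath} {k l : ℤ} (h₁ : TailEqLag x y k)
    (h₂ : TailEqLag y z l) : TailEqLag x z (k + l) := by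
  obtain ⟨μ, ν, p, hμ, hν, rfl⟩ := h₁
  obtain ⟨μ', ν', q, hμ', hν', rfl⟩ := h₂
  simp only [FinPath.length]
  rcases Nat.le_total ν.edges.length μ'.edges.length with hle | hle
  · obtain ⟨τ, hτ, hsplit⟩ := hν.exists_isCat_of_length_le hμ' hle
    have h : μ.rng = τ.src := hμ.1.trans hτ.src_eq.symm
    refine ⟨μ.comp τ h, ν', q, hμ.comp hτ h, hν', ?_⟩
    simp only [FinPath.length, FinPath.comp_edges, hsplit, List.length_append]
    push_cast
    ring
  · obtain ⟨τ, hτ, hsplit⟩ := hμ'.exists_isCat_of_length_le hν hle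
    have h : ν'.rng = τ.src := hν'.1.trans hτ.src_eq.symm
    refine ⟨μ, ν'.comp τ h, p, hμ, hν'.comp hτ h, ?_⟩
    simp only [FinPath.length, FinPath.comp_edges, hsplit, List.length_append]
    push_cast
    ring

theorem TailEq.symm {x y : G.BPath} (h : TailEq x y) : TailEq y x :=
  let ⟨_, hk⟩ := h; ⟨_, hk.symm⟩

theorem TailEq.trans {x y z : G.BPath} (h₁ : TailEq x y) (h₂ : TailEq y z) : TailEq x z := by
  obtain ⟨k, hk⟩ := h₁
  obtain ⟨l, hl⟩ := h₂
  exact ⟨k + l, hk.trans hl⟩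

theorem orbit_eq_of_tailEq {x y : G.BPath} (h : TailEq x y) : orbit x = orbit y :=
  Set.ext fun _ => ⟨fun hz => hz.trans h, fun hz => hz.trans h.symm⟩

theorem IsCat.mem_orbit_iff {μ : G.FinPath} {p q x : G.BPath} (h : IsCat μ p q) :
    p ∈ orbit x ↔ q ∈ orbit x :=
  ⟨fun hp => TailEq.trans ⟨_, h.tailEqLag⟩ hp, fun hq => TailEq.trans ⟨_, h.tailEqLag.symm⟩ hq⟩

/-- Two decompositions `x = μ p = ν p` with `|μ| ≠ |ν|` would exhibit `p` as `c^∞`. -/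
theorem TailEqLag.eq_zero_of_not_isRational {x : G.BPath} (hx : ¬ IsRational x) {k : ℤ}
    (h : TailEqLag x x k) : k = 0 := by
  obtain ⟨μ, ν, p, hμ, hν, rfl⟩ := h
  have key {μ ν : G.FinPath} (hμ : IsCat μ p x) (hν : IsCat ν p x)
      (hle : ν.edges.length ≤ μ.edges.length) : μ.edges.length = ν.edges.length := by
    obtain ⟨τ, hτ, hsplit⟩ := hν.exists_isCat_of_length_le hμ hle
    by_contra hne
    have hτ0 : 0 < τ.length := by
      simp only [FinPath.length]
      simp only [hsplit, List.length_append] at hne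
      omega
    exact hx ⟨τ, p, hτ0, hτ, _, hμ.tailEqLag⟩
  simp only [FinPath.length]
  rcases Nat.le_total ν.edges.length μ.edges.length with hle | hle
  · rw [key hμ hν hle, sub_self]
  · rw [key hν hμ hle, sub_self]

end TailEquivalence

section Prefixes

theorem IsCat.isInfinite {μ : G.FinPath} {p x : G.BPath} (h : IsCat μ p x)
    (hx : x.IsInfinite) : p.IsInfinite := by
  obtain ⟨ρ, hρ⟩ := hx
  obtain ⟨x, hx'⟩ := x
  obtain rfl : x = Sum.inr ρ := hρ
  obtain ⟨ξp | ρp, hp⟩ := p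
  · exact h.2.elim
  · exact ⟨ρp, rfl⟩

theorem exists_isCat_length_eq {x : G.BPath} (hx : x.IsInfinite) (n : ℕ) :
    ∃ (μ : G.FinPath) (d : G.BPath), μ.edges.length = n ∧ d.IsInfinite ∧ IsCat μ d x := by
  induction n with
  | zero => exact ⟨_, x, rfl, hx, isCat_vertexPath x⟩
  | succ n ih =>
    obtain ⟨μ, d, hlen, ⟨ρ, hρ⟩, hμ⟩ := ih
    have he : firstEdge d = some (ρ.edges 0) := by simp [firstEdge, hρ]
    obtain ⟨d', hd'⟩ := exists_isCat_singleE he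
    have h : μ.rng = (singleE G (ρ.edges 0)).src := hμ.1.trans (firstEdge_src he).symm
    exact ⟨μ.comp _ h, d', by simp [hlen], hd'.isInfinite ⟨ρ, hρ⟩, hμ.comp hd' h⟩

theorem IsCat.length_le {μ ξ : G.FinPath} {p x : G.BPath} (h : IsCat μ p x)
    (hx : x.1 = Sum.inl ξ) : μ.edges.length ≤ ξ.edges.length := by
  obtain ⟨x, hx'⟩ := x
  obtain rfl : x = Sum.inl ξ := hx
  obtain ⟨ξp | ρp, hp⟩ := p
  · simp [h.2.2]
  · exact h.2.elim

theorem eq_of_forall_isCat {p q : G.BPath} (hp : p.IsInfinite)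
    (h : ∀ ν : G.FinPath, (∃ d, IsCat ν d p) → ∃ d, IsCat ν d q) : p = q := by
  obtain ⟨ξq | ρq, hq⟩ := q
  · obtain ⟨μ, d, hlen, -, hμ⟩ := exists_isCat_length_eq hp (ξq.edges.length + 1)
    obtain ⟨d', hd'⟩ := h μ ⟨d, hμ⟩
    have := hd'.length_le rfl
    omega
  obtain ⟨p, hp'⟩ := p
  obtain ⟨ρp, rfl⟩ : ∃ ρp, p = Sum.inr ρp := by
    obtain ⟨ρp, hρp⟩ := hp
    exact ⟨ρp, hρp⟩
  refine Subtype.ext (congrArg Sum.inr (InfPath.ext (funext fun n => ?_)))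
  obtain ⟨μ, d, hlen, -, hμ⟩ := exists_isCat_length_eq hp (n + 1)
  obtain ⟨d', hd'⟩ := h μ ⟨d, hμ⟩
  obtain ⟨ξd | ρd, _⟩ := d
  · exact hμ.2.elim
  obtain ⟨ξd' | ρd', _⟩ := d'
  · exact hd'.2.elim
  rw [hμ.2.1 n (by omega), hd'.2.1 n (by omega)]

theorem isCat_vertexBPath_rng {x : G.BPath} {ξ : G.FinPath} (hx : x.1 = Sum.inl ξ) :
    IsCat ξ (vertexBPath G ξ.rng (x.2 ξ hx)) x := by
  obtain ⟨x, hx'⟩ := x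
  obtain rfl : x = Sum.inl ξ := hx
  exact ⟨rfl, rfl, (List.append_nil _).symm⟩

theorem eq_of_firstEdge_eq_none {p q : G.BPath} (hp : firstEdge p = none)
    (hq : firstEdge q = none) (hsrc : p.src = q.src) : p = q := by
  rcases p with ⟨ξp | ρp, _⟩ <;> rcases q with ⟨ξq | ρq, _⟩ <;> simp only [firstEdge] at hp hq
  · refine Subtype.ext (congrArg Sum.inl (FinPath.ext hsrc ?_))
    rw [List.head?_eq_none_iff.mp hp, List.head?_eq_none_iff.mp hq]
  all_goals simp_all

end Prefixes

section ChenModules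

variable {K : Type} [Field K] {x : G.BPath} {M : Type} [AddCommGroup M] [Module K M]
  [Module (LPA G K) M] (sp : ChenSpec G K (fun _ => 1) x M)

namespace ChenSpec

theorem ofE_smul_basis {e : G.E} {p q : orbit x} (h : IsCat (singleE G e) p q) :
    ofE G K e • sp.basis p = sp.basis q := by
  simpa using sp.act_e e p q h

theorem ofG_smul_basis {e : G.E} {p q : orbit x} (h : IsCat (singleE G e) p q) :
    ofG G K e • sp.basis q = sp.basis p := by
  simpa using sp.act_g e p q h

theorem prod_ofE_smul_basis {μ : G.FinPath} {p q : orbit x} (h : IsCat μ p q) :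
    (μ.edges.map (ofE G K)).prod • sp.basis p = sp.basis q := by
  induction hμ : μ.edges generalizing μ q with
  | nil => simp [Subtype.ext (h.eq_of_edges_eq_nil hμ)]
  | cons e t ih =>
    obtain ⟨d, τ, hd, hτ, rfl⟩ := h.exists_of_edges_eq_cons hμ
    have hdx : d ∈ orbit x := hd.mem_orbit_iff.mpr q.2
    rw [List.map_cons, List.prod_cons, mul_smul, ih (q := ⟨d, hdx⟩) hτ rfl,
      sp.ofE_smul_basis hd]

theorem pathElem_smul_basis {μ : G.FinPath} {p q : orbit x} (h : IsCat μ p q) :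
    pathElem G K μ • sp.basis p = sp.basis q := by
  rw [pathElem, mul_smul, sp.prod_ofE_smul_basis h, sp.act_v, if_pos h.src_eq]

theorem prod_ofG_smul_basis {ν : G.FinPath} {p r : orbit x} (h : IsCat ν r p) :
    (ν.edges.reverse.map (ofG G K)).prod • sp.basis p = sp.basis r := by
  induction hν : ν.edges generalizing ν p with
  | nil => simp [Subtype.ext (h.eq_of_edges_eq_nil hν)]
  | cons e t ih =>
    obtain ⟨d, τ, hd, hτ, rfl⟩ := h.exists_of_edges_eq_cons hν
    have hdx : d ∈ orbit x := hd.mem_orbit_iff.mpr p.2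
    rw [List.reverse_cons, List.map_append, List.prod_append, List.map_singleton,
      List.prod_singleton, mul_smul, sp.ofG_smul_basis (p := ⟨d, hdx⟩) hd, ih hτ rfl]

theorem prod_ofG_smul_basis_eq_zero (l : List G.E) {p : orbit x}
    (h : ¬ ∃ (ν : G.FinPath) (r : G.BPath), ν.edges = l ∧ IsCat ν r p) :
    (l.reverse.map (ofG G K)).prod • sp.basis p = 0 := by
  induction l generalizing p with
  | nil => exact absurd ⟨_, p, rfl, isCat_vertexPath (p : G.BPath)⟩ h
  | cons e t ih =>
    rw [List.reverse_cons, List.map_append, List.prod_append, List.map_singleton,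
      List.prod_singleton, mul_smul]
    by_cases hd : ∃ d, IsCat (singleE G e) d p
    · obtain ⟨d, hd⟩ := hd
      rw [sp.ofG_smul_basis (p := ⟨d, hd.mem_orbit_iff.mpr p.2⟩) hd]
      refine ih fun ⟨τ, r, hτ, hr⟩ => h ?_
      have hc : (singleE G e).rng = τ.src := hd.1.trans hr.src_eq.symm
      exact ⟨_, r, by simp [hτ], hd.comp hr hc⟩
    · rw [sp.act_g_zero e p hd, smul_zero]

theorem pathStarElem_smul_basis {ν : G.FinPath} {p r : orbit x} (h : IsCat ν r p) :
    pathStarElem G K ν • sp.basis p = sp.basis r := by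
  rw [pathStarElem, mul_smul, sp.act_v, if_pos h.src_eq, sp.prod_ofG_smul_basis h]

theorem pathStarElem_smul_basis_eq_zero {ν : G.FinPath} {p : orbit x}
    (h : ¬ ∃ r, IsCat ν r p) : pathStarElem G K ν • sp.basis p = 0 := by
  rw [pathStarElem, mul_smul, sp.act_v]
  split_ifs with hsrc
  · refine sp.prod_ofG_smul_basis_eq_zero _ fun ⟨ν', r, hν', hr⟩ => h ⟨r, ?_⟩
    rwa [show ν' = ν from FinPath.ext (hr.src_eq.trans hsrc.symm) hν'] at hr
  · rw [smul_zero]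

end ChenSpec

end ChenModules

section Indicators

variable {K : Type} [Field K]

-- Quantified over all Chen modules, so that one element serves in `V_{[x]}` and `V_{[y]}` alike.
def ActsAsIndicator (a : LPA G K) (U : Set G.BPath) : Prop :=
  ∀ (x : G.BPath) (M : Type) [AddCommGroup M] [Module K M] [Module (LPA G K) M]
    (sp : ChenSpec G K (fun _ => 1) x M) (p : orbit x),
    a • sp.basis p = if (p : G.BPath) ∈ U then sp.basis p else 0

theorem actsAsIndicator_one : ActsAsIndicator (1 : LPA G K) Set.univ := by
  intro x M _ _ _ sp p
  simp

theorem actsAsIndicator_ofV (v : G.V) : ActsAsIndicator (ofV G K v) {p | v = p.src} :=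
  fun _ _ _ _ _ sp p => sp.act_v v p

theorem ActsAsIndicator.mul {a b : LPA G K} {U V : Set G.BPath} (ha : ActsAsIndicator a U)
    (hb : ActsAsIndicator b V) : ActsAsIndicator (a * b) (U ∩ V) := by
  intro x M _ _ _ sp p
  rw [mul_smul, hb x M sp p]
  by_cases hV : (p : G.BPath) ∈ V <;> simp [hV, ha x M sp p]

theorem ActsAsIndicator.one_sub {a : LPA G K} {U : Set G.BPath} (ha : ActsAsIndicator a U) :
    ActsAsIndicator (1 - a) Uᶜ := by
  intro x M _ _ _ sp p
  rw [sub_smul, one_smul, ha x M sp p]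
  by_cases hU : (p : G.BPath) ∈ U <;> simp [hU]

theorem ActsAsIndicator.conj {a : LPA G K} {U : Set G.BPath} (ha : ActsAsIndicator a U)
    (ξ : G.FinPath) :
    ActsAsIndicator (pathElem G K ξ * a * pathStarElem G K ξ) {r | ∃ d ∈ U, IsCat ξ d r} := by
  intro x M _ _ _ sp r
  rw [mul_smul, mul_smul]
  by_cases hr : ∃ d, IsCat ξ d r
  · obtain ⟨d, hd⟩ := hr
    have hdx : d ∈ orbit x := hd.mem_orbit_iff.mpr r.2
    rw [sp.pathStarElem_smul_basis (r := ⟨d, hdx⟩) hd, ha x M sp]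
    have hmem : (∃ d' ∈ U, IsCat ξ d' r) ↔ d ∈ U :=
      ⟨fun ⟨d', hd'U, hd'⟩ => hd'.left_unique hd ▸ hd'U, fun hdU => ⟨d, hdU, hd⟩⟩
    simp only [Set.mem_ofPred_eq, hmem]
    split_ifs
    · exact sp.pathElem_smul_basis hd
    · exact smul_zero _
  · rw [sp.pathStarElem_smul_basis_eq_zero hr, smul_zero, smul_zero,
      if_neg fun ⟨d, _, hd⟩ => hr ⟨d, hd⟩]

theorem ChenSpec.repr_smul_of_actsAsIndicator {x : G.BPath} {M : Type} [AddCommGroup M]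
    [Module K M] [Module (LPA G K) M] [IsScalarTower K (LPA G K) M]
    (sp : ChenSpec G K (fun _ => 1) x M) {a : LPA G K} {U : Set G.BPath}
    (ha : ActsAsIndicator a U) (z : M) :
    sp.basis.repr (a • z) = (sp.basis.repr z).filter (fun q : orbit x => (q : G.BPath) ∈ U) := by
  let filterU : (orbit x →₀ K) →ₗ[K] orbit x →₀ K :=
    ⟨⟨fun f => f.filter fun q => (q : G.BPath) ∈ U, fun _ _ => Finsupp.filter_add⟩,
      fun _ _ => Finsupp.filter_smul⟩
  refine LinearMap.congr_fun (sp.basis.ext (f₁ := sp.basis.repr.toLinearMap ∘ₗ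
    DistribSMul.toLinearMap K M a) (f₂ := filterU ∘ₗ sp.basis.repr.toLinearMap) fun p => ?_) z
  by_cases hp : (p : G.BPath) ∈ U <;>
    simp [filterU, ha x M sp p, hp, Finsupp.filter_single_of_pos, Finsupp.filter_single_of_neg]

end Indicators

section Separation

variable {K : Type} [Field K]

theorem exists_actsAsIndicator_separating_vertexBPath {v : G.V} (hv : IsSingular G v)
    {q : G.BPath} (hq : q ≠ vertexBPath G v hv) :
    ∃ (a : LPA G K) (U : Set G.BPath), ActsAsIndicator a U ∧ vertexBPath G v hv ∈ U ∧ q ∉ U := by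
  by_cases hsrc : v = q.src
  · obtain ⟨e, he⟩ : ∃ e, firstEdge q = some e := Option.ne_none_iff_exists'.mp fun hnone =>
      hq (eq_of_firstEdge_eq_none hnone rfl hsrc.symm)
    obtain ⟨d, hd⟩ := exists_isCat_singleE he
    refine ⟨_, _, (actsAsIndicator_ofV v).mul (actsAsIndicator_one.conj (singleE G e)).one_sub,
      ⟨rfl, fun ⟨_, _, h⟩ => nomatch h.firstEdge_eq⟩, fun h => h.2 ⟨d, trivial, hd⟩⟩
  · exact ⟨_, _, actsAsIndicator_ofV v, rfl, hsrc⟩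

theorem exists_actsAsIndicator_separating {p q : G.BPath} (hpq : p ≠ q) :
    ∃ (a : LPA G K) (U : Set G.BPath), ActsAsIndicator a U ∧ p ∈ U ∧ q ∉ U := by
  rcases hp : p.1 with ξ | ρ
  · have hξ := isCat_vertexBPath_rng hp
    by_cases hq : ∃ d, IsCat ξ d q
    · obtain ⟨d, hd⟩ := hq
      have hdw : d ≠ vertexBPath G ξ.rng (p.2 ξ hp) := fun h => hpq (hξ.right_unique (h ▸ hd))
      obtain ⟨a, U, ha, hwU, hdU⟩ := exists_actsAsIndicator_separating_vertexBPath (K := K) _ hdw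
      exact ⟨_, _, ha.conj ξ, ⟨_, hwU, hξ⟩, fun ⟨d', hd'U, hd'⟩ => hdU (hd'.left_unique hd ▸ hd'U)⟩
    · exact ⟨_, _, actsAsIndicator_one.conj ξ, ⟨_, trivial, hξ⟩, fun ⟨d, _, hd⟩ => hq ⟨d, hd⟩⟩
  · obtain ⟨ν, ⟨d, hd⟩, hνq⟩ : ∃ ν : G.FinPath, (∃ d, IsCat ν d p) ∧ ¬ ∃ d, IsCat ν d q := by
      by_contra! h
      exact hpq (eq_of_forall_isCat ⟨ρ, hp⟩ h)
    exact ⟨_, _, actsAsIndicator_one.conj ν, ⟨d, trivial, hd⟩, fun ⟨d, _, hd⟩ => hνq ⟨d, hd⟩⟩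

theorem exists_actsAsIndicator_separating_finset {p : G.BPath} {S : Finset G.BPath}
    (hp : p ∉ S) :
    ∃ (a : LPA G K) (U : Set G.BPath), ActsAsIndicator a U ∧ p ∈ U ∧ ∀ q ∈ S, q ∉ U := by
  induction S using Finset.induction_on with
  | empty => exact ⟨1, Set.univ, actsAsIndicator_one, trivial, by simp⟩
  | insert q S _ ih =>
    rw [Finset.mem_insert, not_or] at hp
    obtain ⟨a, U, ha, hpU, hSU⟩ := ih hp.2
    obtain ⟨b, V, hb, hpV, hqV⟩ := exists_actsAsIndicator_separating (K := K) hp.1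
    refine ⟨b * a, V ∩ U, hb.mul ha, ⟨hpV, hpU⟩, fun r hr hrVU => ?_⟩
    rcases Finset.mem_insert.mp hr with rfl | hr
    · exact hqV hrVU.1
    · exact hSU r hr hrVU.2

end Separation

namespace ChenSpec

variable {K : Type} [Field K] {x : G.BPath} {M : Type} [AddCommGroup M] [Module K M]
  [Module (LPA G K) M] (sp : ChenSpec G K (fun _ => 1) x M)

theorem basis_mem_of_basis_mem {P : Submodule (LPA G K) M} {p : orbit x} (hp : sp.basis p ∈ P)
    (q : orbit x) : sp.basis q ∈ P := by
  obtain ⟨-, μ, ν, d, hμ, hν, -⟩ := q.2.trans p.2.symm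
  have hdx : d ∈ orbit x := hμ.mem_orbit_iff.mpr q.2
  rw [← sp.pathElem_smul_basis (p := ⟨d, hdx⟩) hμ, ← sp.pathStarElem_smul_basis hν]
  exact P.smul_mem _ (P.smul_mem _ hp)

variable [IsScalarTower K (LPA G K) M]

theorem basis_mem_of_repr_ne_zero {P : Submodule (LPA G K) M} {z : M} (hz : z ∈ P)
    {p : orbit x} (hp : sp.basis.repr z p ≠ 0) : sp.basis p ∈ P := by
  classical
  obtain ⟨a, U, ha, hpU, hSU⟩ := exists_actsAsIndicator_separating_finset (K := K) (p := p)
    (S := ((sp.basis.repr z).support.image Subtype.val).erase p) (by simp)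
  have hrepr : sp.basis.repr (a • z) = Finsupp.single p (sp.basis.repr z p) := by
    ext q
    rw [sp.repr_smul_of_actsAsIndicator ha, Finsupp.filter_apply, Finsupp.single_apply]
    by_cases hqp : p = q
    · simp [← hqp, hpU]
    rw [if_neg hqp]
    split_ifs with hqU
    · by_contra hq
      exact hSU q (Finset.mem_erase.mpr ⟨fun h => hqp (Subtype.ext h.symm),
        Finset.mem_image_of_mem _ (Finsupp.mem_support_iff.mpr hq)⟩) hqU
    · rfl
  have haz : a • z = sp.basis.repr z p • sp.basis p :=
    sp.basis.repr.injective (by rw [hrepr, map_smul, sp.basis.repr_self, Finsupp.smul_single_one])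
  have := P.smul_of_tower_mem (sp.basis.repr z p)⁻¹ (P.smul_mem a hz)
  rwa [haz, smul_smul, inv_mul_cancel₀ hp, one_smul] at this

end ChenSpec

theorem ChenSpec.isSimpleModule {K : Type} [Field K] {x : G.BPath} {M : Type} [AddCommGroup M]
    [Module K M] [Module (LPA G K) M] [IsScalarTower K (LPA G K) M]
    (sp : ChenSpec G K (fun _ => 1) x M) : IsSimpleModule (LPA G K) M := by
  have : Nontrivial M := ⟨⟨_, 0, sp.basis.ne_zero ⟨x, 0, tailEqLag_refl x⟩⟩⟩
  refine { eq_bot_or_eq_top := fun P => or_iff_not_imp_left.mpr fun hP => ?_ }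
  obtain ⟨z, hzP, hz⟩ := (Submodule.ne_bot_iff P).mp hP
  obtain ⟨p, hp⟩ := Finsupp.ne_iff.mp ((map_ne_zero_iff _ sp.basis.repr.injective).mpr hz)
  have hspan : Submodule.span K (Set.range sp.basis) ≤ P.restrictScalars K :=
    Submodule.span_le.mpr <| Set.range_subset_iff.mpr
      (sp.basis_mem_of_basis_mem (sp.basis_mem_of_repr_ne_zero hzP hp))
  rw [sp.basis.span_eq] at hspan
  exact Submodule.eq_top_iff'.mpr fun m => hspan Submodule.mem_top

section Isomorphisms

variable {K : Type} [Field K] {x y : G.BPath}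
  {M : Type} [AddCommGroup M] [Module K M] {N : Type} [AddCommGroup N] [Module K N]

theorem equiv_setCongr_mem_chenW (bM : Module.Basis (orbit y) K M)
    (bN : Module.Basis (orbit x) K N) (h : orbit y = orbit x) {j k : ℤ} (hk : TailEqLag y x k)
    {m : M} (hm : m ∈ chenW bM j) : bM.equiv bN (Equiv.setCongr h) m ∈ chenW bN (j + k) := by
  refine Submodule.span_mono ?_
    (Submodule.apply_mem_span_image_of_mem_span (bM.equiv bN (Equiv.setCongr h)).toLinearMap hm)
  rintro _ ⟨_, ⟨p, hp, rfl⟩, rfl⟩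
  exact ⟨Equiv.setCongr h p, hp.trans hk, (bM.equiv_apply p bN _).symm⟩

variable [Module (LPA G K) M] [Module (LPA G K) N] [IsScalarTower K (LPA G K) N]

theorem ChenSpec.tailEqLag_of_gradedIsoLPA (spM : ChenSpec G K (fun _ => 1) x M)
    (spN : ChenSpec G K (fun _ => 1) y N) {n m : ℤ}
    (h : GradedIsoLPA G K M N (fun k => chenW spM.basis (k + n))
      (fun k => chenW spN.basis (k + m))) :
    TailEqLag x y (m - n) := by
  obtain ⟨f, hf, -⟩ := h
  let bx := spM.basis ⟨x, 0, tailEqLag_refl x⟩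
  have hbx : bx ∈ chenW spM.basis (-n + n) := by
    rw [neg_add_cancel]
    exact Submodule.subset_span ⟨_, tailEqLag_refl x, rfl⟩
  have hsupp (q : orbit y) (hq : spN.basis.repr (f bx) q ≠ 0) : (q : G.BPath) = x := by
    by_contra hqx
    obtain ⟨a, U, ha, hxU, hqU⟩ := exists_actsAsIndicator_separating (K := K) (Ne.symm hqx)
    have hfix : a • f bx = f bx := by
      rw [← f.map_smul, ha x M spM, if_pos hxU]
    rw [← hfix, spN.repr_smul_of_actsAsIndicator ha, Finsupp.filter_apply, if_neg hqU] at hq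
    exact hq rfl
  obtain ⟨q, hq⟩ := Finsupp.ne_iff.mp ((map_ne_zero_iff _ spN.basis.repr.injective).mpr
    ((map_ne_zero_iff _ f.injective).mpr (spM.basis.ne_zero _)))
  have hqy := spN.basis.repr_support_subset_of_mem_span _ (hf _ _ hbx)
    (Finsupp.mem_support_iff.mpr hq)
  rwa [Set.mem_ofPred_eq, hsupp q hq, neg_add_eq_sub] at hqy

variable [IsScalarTower K (LPA G K) M]

theorem ChenSpec.basis_equiv_map_smul (spM : ChenSpec G K (fun _ => 1) y M)
    (spN : ChenSpec G K (fun _ => 1) x N) (h : orbit y = orbit x) (a : LPA G K) (m : M) :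
    spM.basis.equiv spN.basis (Equiv.setCongr h) (a • m) =
      a • spM.basis.equiv spN.basis (Equiv.setCongr h) m := by
  set f := spM.basis.equiv spN.basis (Equiv.setCongr h)
  have hf (p : orbit y) : f (spM.basis p) = spN.basis ⟨p, h ▸ p.2⟩ := spM.basis.equiv_apply ..
  refine (f : M →ₗ[K] N).map_smul_of_map_smul_generators (fun g m => ?_) a m
  refine (f : M →ₗ[K] N).map_smul_of_basis spM.basis _ (fun p => ?_) m
  simp only [LinearEquiv.coe_coe, hf]
  cases g with
  | vtx v =>
    change f (ofV G K v • _) = ofV G K v • _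
    rw [spM.act_v, spN.act_v]
    split_ifs <;> simp [hf]
  | edg e =>
    change f (ofE G K e • _) = ofE G K e • _
    by_cases hq : ∃ q, IsCat (singleE G e) p q
    · obtain ⟨q, hq⟩ := hq
      have hqy : q ∈ orbit y := hq.mem_orbit_iff.mp p.2
      rw [spM.ofE_smul_basis (q := ⟨q, hqy⟩) hq, spN.ofE_smul_basis (q := ⟨q, h ▸ hqy⟩) hq, hf]
    · rw [spM.act_e_zero e p hq, spN.act_e_zero e _ hq, map_zero]
  | ghd e =>
    change f (ofG G K e • _) = ofG G K e • _
    by_cases hd : ∃ d, IsCat (singleE G e) d p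
    · obtain ⟨d, hd⟩ := hd
      have hdy : d ∈ orbit y := hd.mem_orbit_iff.mpr p.2
      rw [spM.ofG_smul_basis (p := ⟨d, hdy⟩) hd, spN.ofG_smul_basis (p := ⟨d, h ▸ hdy⟩) hd, hf]
    · rw [spM.act_g_zero e p hd, spN.act_g_zero e _ hd, map_zero]

theorem ChenSpec.gradedIsoLPA_of_tailEqLag (spM : ChenSpec G K (fun _ => 1) y M)
    (spN : ChenSpec G K (fun _ => 1) x N) {k : ℤ} (hk : TailEqLag y x k) (m : ℤ) :
    GradedIsoLPA G K M N (fun j => chenW spM.basis (j + m))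
      (fun j => chenW spN.basis (j + (m + k))) := by
  have h := orbit_eq_of_tailEq ⟨k, hk⟩
  refine ⟨{ spM.basis.equiv spN.basis (Equiv.setCongr h) with
    map_smul' := spM.basis_equiv_map_smul spN h }, fun j u hu => ?_, fun j u hu => ?_⟩
  · have := equiv_setCongr_mem_chenW _ spN.basis h hk hu
    rwa [add_assoc] at this
  · have := equiv_setCongr_mem_chenW _ spM.basis h.symm hk.symm hu
    rwa [show j + (m + k) + -k = j + m by ring] at this

end Isomorphisms

end DirGraph

open DirGraph

/-- classification of graded simple modules induced from non-rational
paths: if `D` contains exactly one irrational infinite path from each tail-equivalence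
class of irrational paths together with all singular vertices, then the modules
`V_{[x]}(n)` for `x ∈ D`, `n ∈ ℤ` are graded simple, pairwise non-isomorphic as graded
modules, and every `V_{[y]}(m)` with `y` non-rational is graded isomorphic to one of them
(namely to `V_{[x]}(m + k)` where `y ∼_k x`, `x ∈ D`). -/
theorem stmt_6 (G : DirGraph) (K : Type) [Field K] (D : Set G.BPath)
    (hmem : ∀ x ∈ D, ¬ IsRational x ∧ ∀ μ : G.FinPath, x.1 = Sum.inl μ → μ.edges = [])
    (huniq : ∀ x ∈ D, ∀ y ∈ D, TailEq x y → x = y)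
    (hcover : ∀ y : G.BPath, ¬ IsRational y → ∃ x ∈ D, TailEq y x) :
    -- each `V_{[x]}(n)` is graded simple
    (∀ x ∈ D, ∀ _n : ℤ,
      ∀ (M : Type) [AddCommGroup M] [Module K M] [Module (LPA G K) M]
        [IsScalarTower K (LPA G K) M],
      ∀ sp : ChenSpec G K (fun _ => 1) x M,
      (∃ m : M, m ≠ 0) ∧
        ∀ P : Submodule (LPA G K) M,
          GradedCarrier (fun k => chenW sp.basis (k + _n)) ↑P → P = ⊥ ∨ P = ⊤) ∧
    -- pairwise non-isomorphic
    (∀ x ∈ D, ∀ y ∈ D, ∀ n m : ℤ,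
      ∀ (M : Type) [AddCommGroup M] [Module K M] [Module (LPA G K) M]
        [IsScalarTower K (LPA G K) M],
      ∀ (N : Type) [AddCommGroup N] [Module K N] [Module (LPA G K) N]
        [IsScalarTower K (LPA G K) N],
      ∀ (spM : ChenSpec G K (fun _ => 1) x M) (spN : ChenSpec G K (fun _ => 1) y N),
      GradedIsoLPA G K M N (fun k => chenW spM.basis (k + n)) (fun k => chenW spN.basis (k + m)) →
      x = y ∧ n = m) ∧
    -- every shifted Chen module of a non-rational path is graded isomorphic to one of them
    (∀ y : G.BPath, ¬ IsRational y → ∀ m : ℤ, ∃ x ∈ D, ∃ k : ℤ, TailEqLag y x k ∧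
      ∀ (M : Type) [AddCommGroup M] [Module K M] [Module (LPA G K) M]
        [IsScalarTower K (LPA G K) M],
      ∀ (N : Type) [AddCommGroup N] [Module K N] [Module (LPA G K) N]
        [IsScalarTower K (LPA G K) N],
      ∀ (spM : ChenSpec G K (fun _ => 1) y M) (spN : ChenSpec G K (fun _ => 1) x N),
      GradedIsoLPA G K M N (fun j => chenW spM.basis (j + m))
        (fun j => chenW spN.basis (j + (m + k)))) := by
  refine ⟨fun x _ _ M _ _ _ _ sp => ?_, fun x hxD y hyD n m M _ _ _ _ N _ _ _ _ spM spN hiso => ?_,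
    fun y hy m => ?_⟩
  · have := sp.isSimpleModule
    have := IsSimpleModule.nontrivial (LPA G K) M
    exact ⟨exists_ne 0, fun P _ => eq_bot_or_eq_top P⟩
  · have hxy := spM.tailEqLag_of_gradedIsoLPA spN hiso
    obtain rfl := huniq x hxD y hyD ⟨_, hxy⟩
    exact ⟨rfl, by linarith [hxy.eq_zero_of_not_isRational (hmem x hxD).1]⟩
  · obtain ⟨x, hxD, k, hk⟩ := hcover y hy
    exact ⟨x, hxD, k, hk, fun M _ _ _ _ N _ _ _ _ spM spN => spM.gradedIsoLPA_of_tailEqLag spN hk m⟩
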